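/- Suppose u ∈ C_{+,log} is (log, x^k)-convex for some k > 0. Then L_u(r)² ≤ ℓ_u(0) · L_u(2^{k+1} r) for all r ≥ 0, where L_u(r) = Σ_{n=0}^∞ ℓ_u(n) r^n. -/

import Mathlib

noncomputable def ell (u : ℝ → ℝ) (t : ℝ) : ℝ :=
  ⨅ r : {r : ℝ // 0 < r}, u r / (r : ℝ) ^ t

/-!
Since `ℓ_u(t)` is an infimum of the log-linear functions `t ↦ u(r) r^{-t}`, it is log-concave:
`ℓ_u(p) ℓ_u(q) ≤ ℓ_u((p + q)/2)^2`. Convexity of `log u(x^k)` gives, for any `r₁, r₂ > 0`, a point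
`r ≥ r₂ / 2^k` (the `x^k`-midpoint) with `u(r)^2 ≤ u(r₁) u(r₂)`, whence
`ℓ_u(n/2)^2 ≤ 2^{kn} ℓ_u(0) ℓ_u(n)`. So the `n`-th coefficient of the Cauchy square `L_u(r)^2` is at
most `(n + 1) 2^{kn} ℓ_u(0) ℓ_u(n) ≤ ℓ_u(0) ℓ_u(n) (2^{k+1})^n`.
-/

open Real Set Finset

lemma sq_midpoint_le_mul_of_convexOn_log {g : ℝ → ℝ} {s : Set ℝ}
    (hconv : ConvexOn ℝ s fun x => log (g x)) (hg : ∀ x ∈ s, 0 < g x) {x y : ℝ}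
    (hx : x ∈ s) (hy : y ∈ s) : g ((x + y) / 2) ^ 2 ≤ g x * g y := by
  have hmid : (1 / 2 : ℝ) • x + (1 / 2 : ℝ) • y = (x + y) / 2 := by
    simp only [smul_eq_mul]; ring
  have hm : (x + y) / 2 ∈ s := hmid ▸ hconv.1 hx hy (by norm_num) (by norm_num) (by norm_num)
  have hlog := hconv.2 hx hy (by norm_num : (0 : ℝ) ≤ 1 / 2) (by norm_num : (0 : ℝ) ≤ 1 / 2)
    (by norm_num)
  rw [hmid] at hlog
  simp only [smul_eq_mul] at hlog
  rw [← log_le_log_iff (pow_pos (hg _ hm) 2) (mul_pos (hg x hx) (hg y hy)), log_pow,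
    log_mul (hg x hx).ne' (hg y hy).ne']
  push_cast
  linarith

lemma exists_le_two_rpow_mul_and_sq_le_mul {u : ℝ → ℝ} {k : ℝ} (hk : 0 < k)
    (hu : ∀ r > 0, 0 < u r) (hconv : ConvexOn ℝ (Ioi 0) fun x => log (u (x ^ k)))
    {r₁ r₂ : ℝ} (hr₁ : 0 < r₁) (hr₂ : 0 < r₂) :
    ∃ r > 0, r₂ ≤ 2 ^ k * r ∧ u r ^ 2 ≤ u r₁ * u r₂ := by
  have hroot : ∀ {r : ℝ}, 0 < r → (r ^ k⁻¹) ^ k = r := fun hr =>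
    rpow_inv_rpow hr.le hk.ne'
  have hx₁ : 0 < r₁ ^ k⁻¹ := rpow_pos_of_pos hr₁ _
  have hx₂ : 0 < r₂ ^ k⁻¹ := rpow_pos_of_pos hr₂ _
  refine ⟨((r₁ ^ k⁻¹ + r₂ ^ k⁻¹) / 2) ^ k, by positivity, ?_, ?_⟩
  · calc r₂ = 2 ^ k * (r₂ ^ k⁻¹ / 2) ^ k := by
          rw [div_rpow hx₂.le zero_le_two, hroot hr₂]; field_simp
      _ ≤ 2 ^ k * ((r₁ ^ k⁻¹ + r₂ ^ k⁻¹) / 2) ^ k := by gcongr; linarith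
  · have := sq_midpoint_le_mul_of_convexOn_log hconv (fun x hx => hu _ (rpow_pos_of_pos hx k))
      hx₁ hx₂
    rwa [hroot hr₁, hroot hr₂] at this

section Ell

variable {u : ℝ → ℝ}

lemma ell_le (hu : ∀ r > 0, 0 ≤ u r) (t : ℝ) {r : ℝ} (hr : 0 < r) : ell u t ≤ u r / r ^ t :=
  ciInf_le ⟨0, Set.forall_mem_range.2 fun r' : {r : ℝ // 0 < r} =>
    div_nonneg (hu r' r'.2) (rpow_nonneg r'.2.le t)⟩
    (⟨r, hr⟩ : {r : ℝ // 0 < r})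

lemma ell_nonneg (hu : ∀ r > 0, 0 ≤ u r) (t : ℝ) : 0 ≤ ell u t :=
  iInf_nonneg fun r => div_nonneg (hu r r.2) (rpow_nonneg r.2.le t)

lemma le_ell_mul_ell (hu : ∀ r > 0, 0 ≤ u r) {c s t : ℝ}
    (h : ∀ a > 0, ∀ b > 0, c ≤ u a / a ^ s * (u b / b ^ t)) : c ≤ ell u s * ell u t := by
  have : Nonempty {r : ℝ // 0 < r} := ⟨⟨1, one_pos⟩⟩
  rw [ell, iInf_mul_of_nonneg (ell_nonneg hu t)]
  refine le_ciInf fun a => ?_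
  rw [ell, mul_iInf_of_nonneg (div_nonneg (hu a a.2) (rpow_nonneg a.2.le s))]
  exact le_ciInf fun b => h a a.2 b b.2

lemma ell_mul_ell_le_sq_ell_midpoint (hu : ∀ r > 0, 0 ≤ u r) (s t : ℝ) :
    ell u s * ell u t ≤ ell u ((s + t) / 2) ^ 2 := by
  have : Nonempty {r : ℝ // 0 < r} := ⟨⟨1, one_pos⟩⟩
  refine (sqrt_le_left (ell_nonneg hu _)).1 (le_ciInf fun ⟨r, hr⟩ => ?_)
  refine (sqrt_le_left (div_nonneg (hu r hr) (rpow_nonneg hr.le _))).2 ?_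
  calc ell u s * ell u t ≤ u r / r ^ s * (u r / r ^ t) :=
        mul_le_mul (ell_le hu s hr) (ell_le hu t hr) (ell_nonneg hu t)
          (div_nonneg (hu r hr) (rpow_nonneg hr.le s))
    _ = (u r / r ^ ((s + t) / 2)) ^ 2 := by
        rw [div_pow, div_mul_div_comm, ← rpow_add hr,
          ← rpow_natCast (r ^ ((s + t) / 2)) 2, ← rpow_mul hr.le]
        norm_num [sq]

lemma sq_ell_half_le {k : ℝ} (hk : 0 < k) (hu : ∀ r > 0, 0 < u r)
    (hconv : ConvexOn ℝ (Ioi 0) fun x => log (u (x ^ k))) {t : ℝ} (ht : 0 ≤ t) :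
    ell u (t / 2) ^ 2 ≤ 2 ^ (k * t) * (ell u 0 * ell u t) := by
  have hu' : ∀ r > 0, 0 ≤ u r := fun r hr => (hu r hr).le
  rw [← div_le_iff₀' (by positivity)]
  refine le_ell_mul_ell hu' fun r₁ hr₁ r₂ hr₂ => ?_
  obtain ⟨r, hr, hr₂r, hur⟩ := exists_le_two_rpow_mul_and_sq_le_mul hk hu hconv hr₁ hr₂
  rw [rpow_zero, div_one, div_le_iff₀' (by positivity), ← mul_div_assoc]
  calc ell u (t / 2) ^ 2 ≤ (u r / r ^ (t / 2)) ^ 2 :=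
        pow_le_pow_left₀ (ell_nonneg hu' _) (ell_le hu' _ hr) 2
    _ = 2 ^ (k * t) * (u r ^ 2 / (2 ^ k * r) ^ t) := by
        rw [div_pow, ← rpow_mul_natCast hr.le, mul_rpow (by positivity) hr.le,
          ← rpow_mul zero_le_two]
        field_simp
        norm_num
    _ ≤ 2 ^ (k * t) * (u r₁ * u r₂ / r₂ ^ t) := by
        gcongr
        exact mul_nonneg (hu' r₁ hr₁) (hu' r₂ hr₂)

lemma ell_mul_ell_le {k : ℝ} (hk : 0 < k) (hu : ∀ r > 0, 0 < u r)
    (hconv : ConvexOn ℝ (Ioi 0) fun x => log (u (x ^ k))) {p q : ℝ} (hp : 0 ≤ p) (hq : 0 ≤ q) :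
    ell u p * ell u q ≤ 2 ^ (k * (p + q)) * (ell u 0 * ell u (p + q)) :=
  (ell_mul_ell_le_sq_ell_midpoint (fun r hr => (hu r hr).le) p q).trans
    (sq_ell_half_le hk hu hconv (add_nonneg hp hq))

lemma sum_antidiagonal_ell_mul_ell_le {k : ℝ} (hk : 0 < k) (hu : ∀ r > 0, 0 < u r)
    (hconv : ConvexOn ℝ (Ioi 0) fun x => log (u (x ^ k))) (n : ℕ) :
    ∑ x ∈ antidiagonal n, ell u x.1 * ell u x.2 ≤ ell u 0 * ell u n * (2 ^ (k + 1)) ^ n := by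
  have hu' : ∀ r > 0, 0 ≤ u r := fun r hr => (hu r hr).le
  calc ∑ x ∈ antidiagonal n, ell u x.1 * ell u x.2
        ≤ ∑ _x ∈ antidiagonal n, 2 ^ (k * n) * (ell u 0 * ell u n) := by
          refine sum_le_sum fun x hx => ?_
          have := ell_mul_ell_le hk hu hconv x.1.cast_nonneg x.2.cast_nonneg
          rwa [← Nat.cast_add, mem_antidiagonal.1 hx] at this
    _ = (n + 1) * (2 ^ (k * n) * (ell u 0 * ell u n)) := by
          rw [sum_const, Nat.card_antidiagonal, nsmul_eq_mul]
          push_cast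
          ring
    _ ≤ 2 ^ n * (2 ^ (k * n) * (ell u 0 * ell u n)) := by
          have := ell_nonneg hu' 0
          have := ell_nonneg hu' n
          gcongr
          exact_mod_cast Nat.lt_two_pow_self
    _ = ell u 0 * ell u n * (2 ^ (k + 1)) ^ n := by
          rw [← rpow_mul_natCast zero_le_two, add_mul, one_mul, rpow_add two_pos, rpow_natCast]
          ring

end Ell

lemma sq_tsum_mul_pow_le {a c : ℕ → ℝ} {r : ℝ} (ha : ∀ n, 0 ≤ a n) (hr : 0 ≤ r)
    (has : Summable fun n => a n * r ^ n) (hcs : Summable fun n => c n * r ^ n)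
    (hac : ∀ n, ∑ x ∈ antidiagonal n, a x.1 * a x.2 ≤ c n) :
    (∑' n, a n * r ^ n) ^ 2 ≤ ∑' n, c n * r ^ n := by
  have hnn : ∀ n, 0 ≤ a n * r ^ n := fun n => mul_nonneg (ha n) (pow_nonneg hr n)
  have hterm : ∀ n, ∑ x ∈ antidiagonal n, a x.1 * r ^ x.1 * (a x.2 * r ^ x.2) ≤ c n * r ^ n := by
    intro n
    calc ∑ x ∈ antidiagonal n, a x.1 * r ^ x.1 * (a x.2 * r ^ x.2)
          = (∑ x ∈ antidiagonal n, a x.1 * a x.2) * r ^ n := by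
            rw [sum_mul]
            refine sum_congr rfl fun x hx => ?_
            rw [← mem_antidiagonal.1 hx, pow_add]
            ring
      _ ≤ c n * r ^ n := mul_le_mul_of_nonneg_right (hac n) (pow_nonneg hr n)
  have hnorm : Summable fun n => ‖a n * r ^ n‖ :=
    has.congr fun n => (Real.norm_of_nonneg (hnn n)).symm
  rw [sq, tsum_mul_tsum_eq_tsum_sum_antidiagonal_of_summable_norm hnorm hnorm]
  exact Summable.tsum_le_tsum hterm
    (hcs.of_nonneg_of_le (fun n => sum_nonneg fun x _ => mul_nonneg (hnn x.1) (hnn x.2)) hterm) hcs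

theorem L_function_square_bound_general (u : ℝ → ℝ) (k : ℝ) (hk : 0 < k)
    (hpos : ∀ r ≥ 0, 0 < u r)
    (hconv : ConvexOn ℝ (Set.Ici 0) (fun x : ℝ => Real.log (u (x ^ k))))
    (hsum : ∀ r ≥ (0 : ℝ), Summable (fun n : ℕ => ell u n * r ^ n)) :
    ∀ r ≥ (0 : ℝ),
      (∑' n : ℕ, ell u n * r ^ n) ^ 2
        ≤ ell u 0 * ∑' n : ℕ, ell u n * ((2 : ℝ) ^ (k + 1) * r) ^ n := by
  intro r hr
  have hu : ∀ r > 0, 0 < u r := fun r hr => hpos r hr.le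
  have hconv' := hconv.subset Ioi_subset_Ici_self (convex_Ioi 0)
  have hs := hsum (2 ^ (k + 1) * r) (by positivity)
  calc (∑' n : ℕ, ell u n * r ^ n) ^ 2 ≤ ∑' n : ℕ, ell u 0 * ell u n * (2 ^ (k + 1)) ^ n * r ^ n :=
        sq_tsum_mul_pow_le (fun n => ell_nonneg (fun r hr => (hu r hr).le) n) hr (hsum r hr)
          ((hs.mul_left (ell u 0)).congr fun n => by ring)
          (sum_antidiagonal_ell_mul_ell_le hk hu hconv')
    _ = ell u 0 * ∑' n : ℕ, ell u n * (2 ^ (k + 1) * r) ^ n := by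
        rw [← tsum_mul_left]
        exact tsum_congr fun n => by ring

theorem L_function_square_bound (u : ℝ → ℝ) (k : ℝ) (hk : 0 < k)
    (hpos : ∀ r ≥ 0, 0 < u r)
    (hcont : ContinuousOn u (Set.Ici 0))
    (hlim : Filter.Tendsto (fun r => Real.log (u r) / Real.log r)
      Filter.atTop Filter.atTop)
    (hconv : ConvexOn ℝ (Set.Ici 0) (fun x : ℝ => Real.log (u (x ^ k))))
    (hsum : ∀ r ≥ (0 : ℝ), Summable (fun n : ℕ => ell u n * r ^ n)) :
    ∀ r ≥ (0 : ℝ),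
      (∑' n : ℕ, ell u n * r ^ n) ^ 2
        ≤ ell u 0 * ∑' n : ℕ, ell u n * ((2 : ℝ) ^ (k + 1) * r) ^ n :=
  L_function_square_bound_general u k hk hpos hconv hsum
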